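/- Let A and B be abelian groups and let Γ be an infinite finitely generated group. If the wreath product (A × B) ≀ Γ is Hopfian, then A ≀ Γ and B ≀ Γ are Hopfian. -/

import Mathlib

/-- A group is Hopfian if every surjective endomorphism is injective. -/
def IsHopfian (G : Type*) [Group G] : Prop :=
  ∀ φ : G →* G, Function.Surjective φ → Function.Injective φ

/-- A unital ring is directly finite if `x * y = 1` implies `y * x = 1`. -/
def DirectlyFinite (R : Type*) [Ring R] : Prop :=
  ∀ x y : R, x * y = 1 → y * x = 1

/-- The action of `Γ` on the base group `Γ →₀ A` of the wreath product,
given by `(g • f) x = f (g⁻¹ * x)`. -/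
noncomputable def wreathAction (A : Type*) [AddCommGroup A] (Γ : Type*) [Group Γ] :
    Γ →* MulAut (Multiplicative (Γ →₀ A)) where
  toFun g := AddEquiv.toMultiplicative (Finsupp.domCongr (Equiv.mulLeft g))
  map_one' := by
    apply MulEquiv.ext
    intro f
    apply Multiplicative.toAdd.injective
    apply Finsupp.ext
    intro x
    simp [Finsupp.domCongr_apply]
    rfl
  map_mul' g₁ g₂ := by
    apply MulEquiv.ext
    intro f
    apply Multiplicative.toAdd.injective
    apply Finsupp.ext
    intro x
    simp [Finsupp.domCongr_apply, mul_assoc]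
    rfl

/-- The (restricted) wreath product `A ≀ Γ`: the semidirect product of the group
`Γ →₀ A` of finitely supported functions `Γ → A` (pointwise addition) by `Γ`,
acting by `(g • f) x = f (g⁻¹ * x)`. -/
abbrev WreathProduct (A : Type*) [AddCommGroup A] (Γ : Type*) [Group Γ] : Type _ :=
  SemidirectProduct (Multiplicative (Γ →₀ A)) Γ (wreathAction A Γ)

/-- The base group `Γ →₀ A` of the wreath product, as a subgroup of `A ≀ Γ`. -/
noncomputable def WreathProduct.base (A : Type*) [AddCommGroup A] (Γ : Type*) [Group Γ] :
    Subgroup (WreathProduct A Γ) :=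
  (SemidirectProduct.inl : Multiplicative (Γ →₀ A) →* WreathProduct A Γ).range

/-!
A surjective endomorphism `φ` of `A ≀ Γ` maps the base `Γ →₀ A` into itself. Otherwise the image
`N` of the base is an abelian normal subgroup containing an element with `Γ`-coordinate `t ≠ 1`.
Commutators of base elements with elements of `N` lie in `N`, and evaluating the resulting
identities on a delta function forces `2A = 0`, `t` to be a central involution, and every element of
`N` to have `Γ`-coordinate in `{1, t}` and `t`-invariant base coordinate. Composing `φ` with
`A ≀ Γ → A ≀ Q`, `Q = Γ/⟨t⟩`, therefore kills the base, so `Γ` surjects onto `A ≀ Q`; as `Q` is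
infinite, `A ≀ Q` has trivial center, `t` maps to `1`, and `Q` surjects onto `A ≀ Q` and hence onto
`ZMod 2 × Q`. This is impossible for a finitely generated `Q`, since `Hom(Q, ZMod 2)` is finite.

Once `φ` preserves the base it induces `ψ : Γ →* Γ`. Since `(A × B) ≀ Γ` is the fibre product of
`A ≀ Γ` and `B ≀ Γ` over `Γ`, the pair (`φ`, map induced by `ψ` on `B ≀ Γ`) is a surjective
endomorphism of `(A × B) ≀ Γ`; it is injective by hypothesis, and it restricts to `φ`.
-/

lemma Finsupp.mapDomain_eq_zero_of_involutive {α β M : Type*} [AddCommGroup M] {σ : α → α}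
    (hσ : Function.Involutive σ) (hσ_ne : ∀ x, σ x ≠ x) {q : α → β} (hq : ∀ x, q (σ x) = q x)
    {m : α →₀ M} (hm : ∀ x, m (σ x) = m x) (h2 : ∀ a : M, a + a = 0) : m.mapDomain q = 0 := by
  ext c
  rw [Finsupp.mapDomain, Finsupp.sum_apply, Finsupp.coe_zero, Pi.zero_apply]
  refine Finset.sum_involution (fun x _ => σ x) (fun x _ => ?_) (fun x _ _ => hσ_ne x)
    (fun x hx => by simpa [hm] using hx) (fun x _ => hσ x)
  dsimp only
  rw [hq, hm]
  exact h2 _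

instance MonoidHom.finite_of_fg {Q M : Type*} [Monoid Q] [Monoid.FG Q] [Monoid M] [Finite M] :
    Finite (Q →* M) := by
  obtain ⟨S, hS⟩ := Monoid.fg_def.mp ‹_›
  refine Finite.of_injective (fun f : Q →* M => fun s : S => f s) fun f g hfg => ?_
  exact MonoidHom.eq_of_eqOn_denseM hS fun s hs => congrFun hfg ⟨s, hs⟩

/-- Precomposition with `S` embeds `Hom(M × Q, M) ≃ Hom(M, M) × Hom(Q, M)` into `Hom(Q, M)`. -/
lemma not_surjective_prod_of_fg {Q M : Type*} [Group Q] [Group.FG Q] [CommGroup M] [Finite M]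
    [Nontrivial M] (S : Q →* M × Q) : ¬ Function.Surjective S := by
  intro hS
  have hJ : Function.Injective fun p : (M →* M) × (Q →* M) => (p.1.coprod p.2).comp S := by
    rintro ⟨α, β⟩ ⟨α', β'⟩ h
    have h' : α.coprod β = α'.coprod β' := (MonoidHom.cancel_right hS).mp h
    exact Prod.ext (by simpa using congrArg (·.comp (MonoidHom.inl M Q)) h')
      (by simpa using congrArg (·.comp (MonoidHom.inr M Q)) h')
  have : Nontrivial (M →* M) := ⟨⟨1, MonoidHom.id M, fun h => by
    obtain ⟨m, hm⟩ := exists_ne (1 : M)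
    exact hm (DFunLike.congr_fun h m).symm⟩⟩
  have hle := Nat.card_le_card_of_injective _ hJ
  rw [Nat.card_prod] at hle
  have : 1 < Nat.card (M →* M) := Finite.one_lt_card_iff_nontrivial.mpr ‹_›
  have : 0 < Nat.card (Q →* M) := Nat.card_pos
  nlinarith

lemma exists_surjective_addMonoidHom_zmod_two {A : Type*} [AddCommGroup A] [Nontrivial A]
    (h2 : ∀ a : A, a + a = 0) : ∃ σ : A →+ ZMod 2, Function.Surjective σ := by
  let _ : Module (ZMod 2) A := AddCommGroup.zmodModule fun a => by rw [two_nsmul, h2]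
  obtain ⟨a, ha⟩ := exists_ne (0 : A)
  obtain ⟨σ, hσ⟩ := not_forall.mp ((Module.forall_dual_apply_eq_zero_iff (ZMod 2) a).not.mpr ha)
  exact ⟨σ.toAddMonoidHom, LinearMap.surjective_of_ne_zero fun h => hσ (by simp [h])⟩

lemma IsHopfian.of_mulEquiv {G H : Type*} [Group G] [Group H] (hG : IsHopfian G) (e : G ≃* H) :
    IsHopfian H := by
  intro φ hφ
  have h := hG (e.symm.toMonoidHom.comp (φ.comp e.toMonoidHom))
    (e.symm.surjective.comp (hφ.comp e.surjective))
  have hφ_eq : ⇑φ = e ∘ (e.symm.toMonoidHom.comp (φ.comp e.toMonoidHom)) ∘ e.symm := by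
    funext x; simp
  rw [hφ_eq]
  exact e.injective.comp (h.comp e.symm.injective)

namespace WreathProduct

open SemidirectProduct

variable {A B : Type*} [AddCommGroup A] [AddCommGroup B] {Γ Δ : Type*} [Group Γ] [Group Δ]

/-- The additive form of `wreathAction`, so that `mk_mul_mk` holds by `rfl`. -/
noncomputable def translate (g : Γ) : (Γ →₀ A) ≃+ (Γ →₀ A) :=
  Finsupp.domCongr (Equiv.mulLeft g)

@[simp] lemma translate_apply (g : Γ) (f : Γ →₀ A) (x : Γ) : translate g f x = f (g⁻¹ * x) := by
  simp [translate, Finsupp.equivMapDomain_apply]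

lemma translate_single (g x : Γ) (a : A) :
    translate g (Finsupp.single x a) = Finsupp.single (g * x) a := by
  simp [translate, Finsupp.equivMapDomain_single]

@[simp] lemma translate_translate (g h : Γ) (f : Γ →₀ A) :
    translate g (translate h f) = translate (g * h) f := by
  ext x; simp [mul_assoc]

@[simp] lemma translate_one (f : Γ →₀ A) : translate (1 : Γ) f = f := by
  ext x; simp

noncomputable def mk (f : Γ →₀ A) (g : Γ) : WreathProduct A Γ := ⟨Multiplicative.ofAdd f, g⟩

def toFinsupp (x : WreathProduct A Γ) : Γ →₀ A := x.left.toAdd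

@[simp] lemma toFinsupp_mk (f : Γ →₀ A) (g : Γ) : (mk f g).toFinsupp = f := rfl

@[simp] lemma right_mk (f : Γ →₀ A) (g : Γ) : (mk f g).right = g := rfl

lemma mk_toFinsupp_right (x : WreathProduct A Γ) : mk x.toFinsupp x.right = x := rfl

lemma exists_eq_mk (x : WreathProduct A Γ) : ∃ f g, x = mk f g := ⟨_, _, rfl⟩

@[simp] lemma mk_inj {f f' : Γ →₀ A} {g g' : Γ} : mk f g = mk f' g' ↔ f = f' ∧ g = g' := by
  simp [mk, SemidirectProduct.ext_iff]

lemma ext {x y : WreathProduct A Γ} (hf : x.toFinsupp = y.toFinsupp) (hr : x.right = y.right) :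
    x = y := by
  rw [← mk_toFinsupp_right x, ← mk_toFinsupp_right y, hf, hr]

@[simp] lemma mk_mul_mk (f f' : Γ →₀ A) (g g' : Γ) :
    mk f g * mk f' g' = mk (f + translate g f') (g * g') := rfl

@[simp] lemma inv_mk (f : Γ →₀ A) (g : Γ) : (mk f g)⁻¹ = mk (-translate g⁻¹ f) g⁻¹ := by
  rw [← map_neg]; rfl

@[simp] lemma mk_zero_one : mk (0 : Γ →₀ A) 1 = 1 := rfl

@[simp] lemma inr_eq_mk (g : Γ) : (inr g : WreathProduct A Γ) = mk 0 g := rfl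

lemma mk_one_mul_inr (x : WreathProduct A Γ) : mk x.toFinsupp 1 * inr x.right = x := by
  obtain ⟨f, r, rfl⟩ := exists_eq_mk x
  simp

lemma mem_base_iff {x : WreathProduct A Γ} : x ∈ base A Γ ↔ x.right = 1 := by
  rw [base, range_inl_eq_ker_rightHom, MonoidHom.mem_ker, rightHom_eq_right]

lemma eq_zero_of_forall_translate_eq [Infinite Γ] {f : Γ →₀ A} (h : ∀ g, translate g f = f) :
    f = 0 := by
  by_contra hf
  obtain ⟨x₀, hx₀⟩ := Finsupp.ne_iff.mp hf
  have hconst : ∀ x, f x = f x₀ := fun x => by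
    simpa using (DFunLike.congr_fun (h (x * x₀⁻¹)) x).symm
  exact Set.infinite_univ (f.support.finite_toSet.subset fun x _ => by simpa [hconst x] using hx₀)

lemma eq_one_or_of_translate_single_sub_single {r s : Γ} {a : A} (ha : a ≠ 0) (hr : r ≠ 1)
    (h : translate s (Finsupp.single 1 a - Finsupp.single r a) =
      Finsupp.single 1 a - Finsupp.single r a) :
    s = 1 ∨ (s * r = 1 ∧ a + a = 0) := by
  by_cases hs : s = 1
  · exact .inl hs
  have h1 := DFunLike.congr_fun h 1
  by_cases hsr : s * r = 1
  · have hs_inv : s⁻¹ = r := inv_eq_of_mul_eq_one_right hsr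
    have hneg : -a = a := by simpa [hs_inv, hr, Ne.symm hr] using h1
    refine .inr ⟨hsr, ?_⟩
    nth_rewrite 1 [← hneg]
    exact neg_add_cancel a
  · have hs_inv : s⁻¹ ≠ r := fun h => hsr (by rw [← h, mul_inv_cancel])
    exact absurd (by simpa [hs, hs_inv, hr] using h1.symm) ha

lemma commute_mk_one_iff {d : Γ →₀ A} {y : WreathProduct A Γ} :
    Commute (mk d 1) y ↔ translate y.right d = d := by
  obtain ⟨f, r, rfl⟩ := exists_eq_mk y
  simp only [Commute, SemiconjBy, mk_mul_mk, translate_one, mul_one, one_mul, mk_inj, and_true,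
    right_mk]
  rw [add_comm, add_left_cancel_iff, eq_comm]

lemma commute_mk_mk_iff {f f' : Γ →₀ A} {r : Γ} :
    Commute (mk f r) (mk f' r) ↔ f - translate r f = f' - translate r f' := by
  simp only [Commute, SemiconjBy, mk_mul_mk, mk_inj, and_true]
  rw [sub_eq_sub_iff_add_eq_add, add_comm f', eq_comm]

lemma mk_one_commutator (b : Γ →₀ A) (x : WreathProduct A Γ) :
    mk b 1 * x * (mk b 1)⁻¹ * x⁻¹ = mk (b - translate x.right b) 1 := by
  obtain ⟨f, r, rfl⟩ := exists_eq_mk x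
  simp only [mk_mul_mk, translate_one, one_mul, inv_mk, inv_one, map_neg, mul_one,
    translate_translate, mul_inv_cancel, right_mk, mk_inj, and_true]
  abel

lemma inr_conj (g : Γ) (x : WreathProduct A Γ) :
    inr g * x * (inr g)⁻¹ = mk (translate g x.toFinsupp) (g * x.right * g⁻¹) := by
  obtain ⟨f, r, rfl⟩ := exists_eq_mk x
  simp

instance base_normal : (base A Γ).Normal := by
  rw [base, range_inl_eq_ker_rightHom]
  infer_instance

lemma commute_of_mem_base {x y : WreathProduct A Γ} (hx : x ∈ base A Γ) (hy : y ∈ base A Γ) :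
    Commute x y := by
  rw [← mk_toFinsupp_right x, mem_base_iff.mp hx, commute_mk_one_iff, mem_base_iff.mp hy,
    translate_one]

lemma center_eq_bot [Infinite Γ] [Nontrivial A] : Subgroup.center (WreathProduct A Γ) = ⊥ := by
  refine (Subgroup.eq_bot_iff_forall _).mpr fun z hz => ?_
  rw [Subgroup.mem_center_iff] at hz
  obtain ⟨a, ha⟩ := exists_ne (0 : A)
  have hr : z.right = 1 := by
    have h := commute_mk_one_iff.mp (hz (mk (Finsupp.single 1 a) 1))
    rwa [translate_single, mul_one, Finsupp.single_left_inj ha] at h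
  have hf : z.toFinsupp = 0 := eq_zero_of_forall_translate_eq fun g => by
    have h := hz (mk 0 g)
    rw [← mk_toFinsupp_right z, hr] at h
    simpa using h
  rw [← mk_toFinsupp_right z, hf, hr, mk_zero_one]

section AbelianNormal

variable {N : Subgroup (WreathProduct A Γ)} [N.Normal]

lemma translate_fixes_sub_translate_of_mem (hN : ∀ x ∈ N, ∀ y ∈ N, Commute x y)
    {x y : WreathProduct A Γ} (hx : x ∈ N) (hy : y ∈ N) (b : Γ →₀ A) :
    translate y.right (b - translate x.right b) = b - translate x.right b := by
  have hc : mk b 1 * x * (mk b 1)⁻¹ * x⁻¹ ∈ N :=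
    N.mul_mem (Subgroup.Normal.conj_mem ‹_› x hx _) (N.inv_mem hx)
  rw [mk_one_commutator] at hc
  exact commute_mk_one_iff.mp (hN _ hc y hy)

lemma right_eq_one_or_of_mem [Nontrivial A] (hN : ∀ x ∈ N, ∀ y ∈ N, Commute x y)
    {x y : WreathProduct A Γ} (hx : x ∈ N) (hy : y ∈ N) (hx1 : x.right ≠ 1) :
    y.right = 1 ∨ (y.right * x.right = 1 ∧ ∀ a : A, a + a = 0) := by
  by_cases hy1 : y.right = 1
  · exact .inl hy1
  have key : ∀ a : A, a ≠ 0 → y.right * x.right = 1 ∧ a + a = 0 := fun a ha => by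
    have h := translate_fixes_sub_translate_of_mem hN hx hy (Finsupp.single 1 a)
    rw [translate_single, mul_one] at h
    exact (eq_one_or_of_translate_single_sub_single ha hx1 h).resolve_left hy1
  obtain ⟨a₀, ha₀⟩ := exists_ne (0 : A)
  refine .inr ⟨(key a₀ ha₀).1, fun a => ?_⟩
  rcases eq_or_ne a 0 with rfl | ha
  · exact add_zero 0
  · exact (key a ha).2

variable [Nontrivial A] {u : WreathProduct A Γ}

lemma right_eq_one_or_eq_of_mem (hN : ∀ x ∈ N, ∀ y ∈ N, Commute x y) (hu : u ∈ N)
    (hu1 : u.right ≠ 1) {x : WreathProduct A Γ} (hx : x ∈ N) :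
    x.right = 1 ∨ x.right = u.right := by
  have hsq := ((right_eq_one_or_of_mem hN hu hu hu1).resolve_left hu1).1
  refine (right_eq_one_or_of_mem hN hu hx hu1).imp_right fun h => ?_
  exact mul_right_cancel (h.1.trans hsq.symm)

lemma commute_right_of_mem (hN : ∀ x ∈ N, ∀ y ∈ N, Commute x y) (hu : u ∈ N)
    (hu1 : u.right ≠ 1) (g : Γ) : Commute g u.right := by
  have hc : inr g * u * (inr g)⁻¹ ∈ N := Subgroup.Normal.conj_mem ‹_› u hu _
  rw [inr_conj] at hc
  rcases right_eq_one_or_eq_of_mem hN hu hu1 hc with h | h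
  · exact absurd (by simpa using h) hu1
  · exact mul_inv_eq_iff_eq_mul.mp h

lemma translate_toFinsupp_of_mem [Infinite Γ] (hN : ∀ x ∈ N, ∀ y ∈ N, Commute x y) (hu : u ∈ N)
    (hu1 : u.right ≠ 1) {x : WreathProduct A Γ} (hx : x ∈ N) :
    translate u.right x.toFinsupp = x.toFinsupp := by
  rcases right_eq_one_or_eq_of_mem hN hu hu1 hx with h | h
  · rw [← mk_toFinsupp_right x, h] at hx
    exact commute_mk_one_iff.mp (hN _ hx u hu)
  have hinv : ∀ g, translate g (x.toFinsupp - translate u.right x.toFinsupp) =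
      x.toFinsupp - translate u.right x.toFinsupp := fun g => by
    have hc : inr g * x * (inr g)⁻¹ ∈ N := Subgroup.Normal.conj_mem ‹_› x hx _
    rw [inr_conj, h, (commute_right_of_mem hN hu hu1 g).eq, mul_inv_cancel_right] at hc
    have hcomm := hN x hx _ hc
    rw [← mk_toFinsupp_right x, h, commute_mk_mk_iff, toFinsupp_mk] at hcomm
    rw [map_sub, translate_translate, hcomm, translate_translate,
      ← (commute_right_of_mem hN hu hu1 g).eq]
  exact (sub_eq_zero.mp (eq_zero_of_forall_translate_eq hinv)).symm

end AbelianNormal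

lemma mapDomain_translate (β : Γ →* Δ) (g : Γ) (f : Γ →₀ A) :
    (translate g f).mapDomain β = translate (β g) (f.mapDomain β) := by
  induction f using Finsupp.induction_linear with
  | zero => simp
  | add f f' hf hf' => simp only [map_add, Finsupp.mapDomain_add, hf, hf']
  | single x a => simp [translate_single]

noncomputable def mapDomain (β : Γ →* Δ) : WreathProduct A Γ →* WreathProduct A Δ :=
  MonoidHom.mk' (fun x => mk (x.toFinsupp.mapDomain β) (β x.right)) fun x y => by
    obtain ⟨f, r, rfl⟩ := exists_eq_mk x
    obtain ⟨f', r', rfl⟩ := exists_eq_mk y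
    simp [Finsupp.mapDomain_add, mapDomain_translate]

@[simp] lemma mapDomain_mk (β : Γ →* Δ) (f : Γ →₀ A) (g : Γ) :
    mapDomain β (mk f g) = mk (f.mapDomain β) (β g) := rfl

lemma mapDomain_surjective {β : Γ →* Δ} (hβ : Function.Surjective β) :
    Function.Surjective (mapDomain (A := A) β) := by
  intro y
  obtain ⟨f, hf⟩ := Finsupp.mapDomain_surjective hβ y.toFinsupp
  obtain ⟨g, hg⟩ := hβ y.right
  exact ⟨mk f g, by rw [mapDomain_mk, hf, hg, mk_toFinsupp_right]⟩

lemma mapRange_translate (σ : A →+ B) (g : Γ) (f : Γ →₀ A) :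
    Finsupp.mapRange.addMonoidHom σ (translate g f) =
      translate g (Finsupp.mapRange.addMonoidHom σ f) := by
  ext x; simp

noncomputable def mapRange (σ : A →+ B) : WreathProduct A Γ →* WreathProduct B Γ :=
  MonoidHom.mk' (fun x => mk (Finsupp.mapRange.addMonoidHom σ x.toFinsupp) x.right) fun x y => by
    obtain ⟨f, r, rfl⟩ := exists_eq_mk x
    obtain ⟨f', r', rfl⟩ := exists_eq_mk y
    simp only [mk_mul_mk, toFinsupp_mk, right_mk, map_add, mapRange_translate]

@[simp] lemma mapRange_mk (σ : A →+ B) (f : Γ →₀ A) (g : Γ) :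
    mapRange σ (mk f g) = mk (Finsupp.mapRange.addMonoidHom σ f) g := rfl

noncomputable def mapRangeMulEquiv (e : A ≃+ B) : WreathProduct A Γ ≃* WreathProduct B Γ :=
  MonoidHom.toMulEquiv (mapRange e) (mapRange e.symm)
    (MonoidHom.ext fun x => by obtain ⟨f, r, rfl⟩ := exists_eq_mk x; exact ext (by ext; simp) rfl)
    (MonoidHom.ext fun x => by obtain ⟨f, r, rfl⟩ := exists_eq_mk x; exact ext (by ext; simp) rfl)

lemma translate_liftAddHom {C : Type*} [AddCommGroup C] (σ : A →+ C) (g : Γ) (f : Γ →₀ A) :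
    Finsupp.liftAddHom (fun _ => σ) (translate g f) = Finsupp.liftAddHom (fun _ => σ) f := by
  induction f using Finsupp.induction_linear with
  | zero => simp
  | add f f' hf hf' => simp only [map_add, hf, hf']
  | single x a => simp [translate_single]

noncomputable def augmentation {C : Type*} [AddCommGroup C] (σ : A →+ C) :
    WreathProduct A Γ →* Multiplicative C × Γ :=
  MonoidHom.mk' (fun x => (.ofAdd (Finsupp.liftAddHom (fun _ => σ) x.toFinsupp), x.right))
    fun x y => by
      obtain ⟨f, r, rfl⟩ := exists_eq_mk x
      obtain ⟨f', r', rfl⟩ := exists_eq_mk y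
      simp only [mk_mul_mk, toFinsupp_mk, right_mk, map_add, translate_liftAddHom, ofAdd_add,
        Prod.mk_mul_mk]

lemma augmentation_surjective {C : Type*} [AddCommGroup C] {σ : A →+ C}
    (hσ : Function.Surjective σ) : Function.Surjective (augmentation (Γ := Γ) σ) := by
  rintro ⟨c, g⟩
  obtain ⟨a, ha⟩ := hσ c.toAdd
  exact ⟨mk (Finsupp.single 1 a) g, by simp [augmentation, ha]⟩

lemma not_surjective_of_fg_of_two_torsion {Q : Type*} [Group Q] [Group.FG Q] [Nontrivial A]
    (h2 : ∀ a : A, a + a = 0) (Ψ : Q →* WreathProduct A Q) : ¬ Function.Surjective Ψ := by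
  intro hΨ
  obtain ⟨σ, hσ⟩ := exists_surjective_addMonoidHom_zmod_two h2
  exact not_surjective_prod_of_fg ((augmentation σ).comp Ψ)
    ((augmentation_surjective hσ).comp hΨ)

/-- Each fibre of `q` is a union of pairs `{x, u.right * x}` on which `y.toFinsupp` is constant,
and `A` has exponent `2`. -/
lemma mapDomain_eq_one_of_mem [Infinite Γ] [Nontrivial A] {N : Subgroup (WreathProduct A Γ)}
    [N.Normal] (hN : ∀ x ∈ N, ∀ y ∈ N, Commute x y) {u : WreathProduct A Γ} (hu : u ∈ N)
    (hu1 : u.right ≠ 1) {q : Γ →* Δ} (hq : q u.right = 1) {y : WreathProduct A Γ} (hy : y ∈ N) :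
    mapDomain q y = 1 := by
  obtain ⟨hsq, h2⟩ := (right_eq_one_or_of_mem hN hu hu hu1).resolve_left hu1
  have hfix := translate_toFinsupp_of_mem hN hu hu1 hy
  have hright : q y.right = 1 := by
    rcases right_eq_one_or_eq_of_mem hN hu hu1 hy with h | h <;> simp [h, hq]
  have hfunc : y.toFinsupp.mapDomain q = 0 :=
    Finsupp.mapDomain_eq_zero_of_involutive (σ := (u.right * ·))
      (fun x => by simp [← mul_assoc, hsq]) (fun x h => hu1 (by simpa using h))
      (fun x => by simp [hq]) (fun x => by conv_lhs => rw [← hfix]; simp) h2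
  rw [← mk_toFinsupp_right y, mapDomain_mk, hfunc, hright, mk_zero_one]

lemma not_surjective_of_le_center [Infinite Γ] [Group.FG Γ] [Nontrivial A]
    (h2 : ∀ a : A, a + a = 0) {H : Subgroup Γ} [H.Normal] [Finite H]
    (hH : H ≤ Subgroup.center Γ) (Ψ : Γ →* WreathProduct A (Γ ⧸ H)) :
    ¬ Function.Surjective Ψ := by
  intro hΨ
  have : Infinite (Γ ⧸ H) := by
    rw [← Subgroup.index_eq_zero_iff_infinite]
    have := H.card_mul_index
    rw [Nat.card_eq_zero_of_infinite (α := Γ)] at this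
    exact (mul_eq_zero.mp this).resolve_left Nat.card_pos.ne'
  have hker : H ≤ Ψ.ker := fun h hh => by
    rw [MonoidHom.mem_ker, ← Subgroup.mem_bot, ← center_eq_bot, Subgroup.mem_center_iff]
    intro y
    obtain ⟨g, rfl⟩ := hΨ y
    rw [← map_mul, ← map_mul, Subgroup.mem_center_iff.mp (hH hh) g]
  exact not_surjective_of_fg_of_two_torsion h2 (QuotientGroup.lift H Ψ hker)
    (QuotientGroup.lift_surjective_of_surjective H Ψ hΨ hker)

lemma right_map_eq_one_of_mem_base [Infinite Γ] [Group.FG Γ]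
    {φ : WreathProduct A Γ →* WreathProduct A Γ} (hφ : Function.Surjective φ)
    {x : WreathProduct A Γ} (hx : x ∈ base A Γ) : (φ x).right = 1 := by
  by_contra hu1
  have : Nontrivial A := by
    by_contra h
    rw [not_nontrivial_iff_subsingleton] at h
    rw [← mk_toFinsupp_right x, mem_base_iff.mp hx, Subsingleton.elim x.toFinsupp 0,
      mk_zero_one, map_one] at hu1
    exact hu1 rfl
  set N := (base A Γ).map φ
  have hN : ∀ y ∈ N, ∀ z ∈ N, Commute y z := by
    rintro _ ⟨a, ha, rfl⟩ _ ⟨b, hb, rfl⟩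
    exact (commute_of_mem_base ha hb).map φ
  have : N.Normal := base_normal.map φ hφ
  have hu : φ x ∈ N := Subgroup.mem_map_of_mem φ hx
  obtain ⟨hsq, h2⟩ := (right_eq_one_or_of_mem hN hu hu hu1).resolve_left hu1
  set H := Subgroup.zpowers (φ x).right
  have hH : H ≤ Subgroup.center Γ := Subgroup.zpowers_le.mpr <|
    Subgroup.mem_center_iff.mpr fun g => commute_right_of_mem hN hu hu1 g
  have : H.Normal := ⟨fun n hn g => by
    rwa [Subgroup.mem_center_iff.mp (hH hn) g, mul_inv_cancel_right]⟩
  have : Finite H := IsOfFinOrder.finite_zpowers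
    (isOfFinOrder_iff_pow_eq_one.mpr ⟨2, two_pos, by rw [pow_two, hsq]⟩) |>.to_subtype
  refine not_surjective_of_le_center h2 hH ((mapDomain (QuotientGroup.mk' H)).comp (φ.comp inr))
    fun y => ?_
  obtain ⟨z, rfl⟩ := mapDomain_surjective (QuotientGroup.mk'_surjective H) y
  obtain ⟨w, rfl⟩ := hφ z
  have hbase := mapDomain_eq_one_of_mem hN hu hu1 (q := QuotientGroup.mk' H)
    ((QuotientGroup.eq_one_iff _).mpr (Subgroup.mem_zpowers _))
    (Subgroup.mem_map_of_mem φ (mem_base_iff.mpr (right_mk w.toFinsupp 1)))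
  refine ⟨w.right, ?_⟩
  rw [MonoidHom.comp_apply, MonoidHom.comp_apply]
  conv_rhs => rw [← mk_one_mul_inr w, map_mul, map_mul, hbase, one_mul]

noncomputable def prodMk (x : WreathProduct A Γ) (y : WreathProduct B Γ) :
    WreathProduct (A × B) Γ :=
  mk (Finsupp.zipWith Prod.mk rfl x.toFinsupp y.toFinsupp) x.right

@[simp] lemma mapRange_fst_prodMk (x : WreathProduct A Γ) (y : WreathProduct B Γ) :
    mapRange (AddMonoidHom.fst A B) (prodMk x y) = x := by
  refine ext (Finsupp.ext fun a => ?_) ?_ <;> simp [prodMk]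

lemma mapRange_snd_prodMk {x : WreathProduct A Γ} {y : WreathProduct B Γ}
    (h : x.right = y.right) : mapRange (AddMonoidHom.snd A B) (prodMk x y) = y := by
  refine ext (Finsupp.ext fun a => ?_) ?_ <;> simp [prodMk, h]

lemma prodMk_mapRange_fst_snd (z : WreathProduct (A × B) Γ) :
    prodMk (mapRange (AddMonoidHom.fst A B) z) (mapRange (AddMonoidHom.snd A B) z) = z := by
  obtain ⟨F, r, rfl⟩ := exists_eq_mk z
  refine ext (Finsupp.ext fun a => ?_) ?_ <;> simp [prodMk]

lemma prodMk_mul {x x' : WreathProduct A Γ} {y y' : WreathProduct B Γ} (h : x.right = y.right) :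
    prodMk (x * x') (y * y') = prodMk x y * prodMk x' y' := by
  obtain ⟨f, r, rfl⟩ := exists_eq_mk x
  obtain ⟨f', r', rfl⟩ := exists_eq_mk x'
  obtain ⟨g, s, rfl⟩ := exists_eq_mk y
  obtain ⟨g', s', rfl⟩ := exists_eq_mk y'
  simp only [right_mk] at h
  subst h
  refine ext (Finsupp.ext fun a => ?_) ?_ <;> simp [prodMk]

noncomputable def prodMap (φ : WreathProduct A Γ →* WreathProduct A Γ) (ψ : Γ →* Γ)
    (hφ : ∀ x, (φ x).right = ψ x.right) : WreathProduct (A × B) Γ →* WreathProduct (A × B) Γ :=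
  MonoidHom.mk' (fun z => prodMk (φ (mapRange (AddMonoidHom.fst A B) z))
      (mapDomain ψ (mapRange (AddMonoidHom.snd A B) z))) fun z z' => by
    obtain ⟨F, r, rfl⟩ := exists_eq_mk z
    simp only [map_mul]
    exact prodMk_mul (by simp [hφ])

lemma prodMap_prodMk {φ : WreathProduct A Γ →* WreathProduct A Γ} {ψ : Γ →* Γ}
    (hφ : ∀ x, (φ x).right = ψ x.right) {x : WreathProduct A Γ} {y : WreathProduct B Γ}
    (h : x.right = y.right) : prodMap φ ψ hφ (prodMk x y) = prodMk (φ x) (mapDomain ψ y) := by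
  simp [prodMap, mapRange_snd_prodMk h]

lemma injective_of_isHopfian_prod (hH : IsHopfian (WreathProduct (A × B) Γ))
    {φ : WreathProduct A Γ →* WreathProduct A Γ} (hφ : Function.Surjective φ) {ψ : Γ →* Γ}
    (hψ : ∀ x, (φ x).right = ψ x.right) : Function.Injective φ := by
  have hψ_surj : Function.Surjective ψ := fun g => by
    obtain ⟨x, hx⟩ := hφ (inr g)
    exact ⟨x.right, by rw [← hψ, hx]; rfl⟩
  have hΦ : Function.Surjective (prodMap (B := B) φ ψ hψ) := fun z => by
    obtain ⟨x, hx⟩ := hφ (mapRange (AddMonoidHom.fst A B) z)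
    obtain ⟨f, hf⟩ :=
      Finsupp.mapDomain_surjective hψ_surj (mapRange (AddMonoidHom.snd A B) z).toFinsupp
    refine ⟨prodMk x (mk f x.right), ?_⟩
    rw [prodMap_prodMk hψ (right_mk f x.right).symm, mapDomain_mk, hf, ← hψ, hx]
    obtain ⟨F, r, rfl⟩ := exists_eq_mk z
    exact prodMk_mapRange_fst_snd _
  have hΦ_prodMk : ∀ w, prodMap φ ψ hψ (prodMk w (inr w.right : WreathProduct B Γ)) =
      prodMk (φ w) (inr (φ w).right) :=
    fun w => by rw [prodMap_prodMk hψ (right_inr w.right).symm, hψ]; rfl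
  intro u v huv
  have h := hH _ hΦ ((hΦ_prodMk u).trans (huv ▸ hΦ_prodMk v).symm)
  simpa using congrArg (mapRange (AddMonoidHom.fst A B)) h

lemma exists_right_map_eq [Infinite Γ] [Group.FG Γ] {φ : WreathProduct A Γ →* WreathProduct A Γ}
    (hφ : Function.Surjective φ) : ∃ ψ : Γ →* Γ, ∀ x, (φ x).right = ψ x.right := by
  refine ⟨rightHom.comp (φ.comp inr), fun x => ?_⟩
  conv_lhs => rw [← mk_one_mul_inr x]
  rw [map_mul, mul_right, right_map_eq_one_of_mem_base hφ (mem_base_iff.mpr rfl), one_mul]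
  rfl

theorem isHopfian_of_isHopfian_prod [Infinite Γ] [Group.FG Γ]
    (h : IsHopfian (WreathProduct (A × B) Γ)) : IsHopfian (WreathProduct A Γ) := fun _ hφ =>
  let ⟨_, hψ⟩ := exists_right_map_eq hφ
  injective_of_isHopfian_prod h hφ hψ

end WreathProduct

/-- Let `A`, `B` be abelian groups and `Γ` an infinite finitely generated group. If
`(A × B) ≀ Γ` is Hopfian, then `A ≀ Γ` and `B ≀ Γ` are Hopfian. -/
theorem wreath_product_base_factors_hopfian (A B : Type*) [AddCommGroup A]
    [AddCommGroup B] (Γ : Type*) [Group Γ] [Group.FG Γ] [Infinite Γ]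
    (h : IsHopfian (WreathProduct (A × B) Γ)) :
    IsHopfian (WreathProduct A Γ) ∧ IsHopfian (WreathProduct B Γ) :=
  ⟨WreathProduct.isHopfian_of_isHopfian_prod h,
    WreathProduct.isHopfian_of_isHopfian_prod (h.of_mulEquiv (WreathProduct.mapRangeMulEquiv
      (AddEquiv.prodComm (M := A) (N := B))))⟩
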